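/- Fix a tabular quasi-normal modal logic L = Log(𝓕) with 𝓕 a finite set of finite rooted frames (roots named 0), a modal formula φ, and σ ⊆ sig(φ). Fix a σ-encoding for L and the associated translations rt_{F,L} for F ∈ 𝓕. If for each F ∈ 𝓕, ξ_F ∈ PL(σ_F) is a uniform σ_F-interpolant for tr_{F,0}(φ) in propositional logic, then the disjunction ⋁_{F∈𝓕} rt_{F,L}(ξ_F) is a strongest L(σ)-implicate of φ. -/

import Mathlib

inductive MForm (α : Type) : Type
  | top : MForm α
  | atom : α → MForm α
  | neg : MForm α → MForm α
  | and : MForm α → MForm α → MForm α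
  | box : MForm α → MForm α
deriving DecidableEq

namespace MForm

def imp {α : Type} (φ ψ : MForm α) : MForm α := neg (and φ (neg ψ))

def dia {α : Type} (φ : MForm α) : MForm α := neg (box (neg φ))

def sig {α : Type} [DecidableEq α] : MForm α → Finset α
  | top => ∅
  | atom p => {p}
  | neg φ => sig φ
  | and φ ψ => sig φ ∪ sig ψ
  | box φ => sig φ

def IsProp {α : Type} : MForm α → Prop
  | top => True
  | atom _ => True
  | neg φ => IsProp φ
  | and φ ψ => IsProp φ ∧ IsProp ψ
  | box _ => False

def subf {α : Type} [DecidableEq α] : MForm α → Finset (MForm α)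
  | top => {top}
  | atom p => {atom p}
  | neg φ => insert (neg φ) (subf φ)
  | and φ ψ => insert (and φ ψ) (subf φ ∪ subf ψ)
  | box φ => insert (box φ) (subf φ)

/-- The dag-size of a formula: the number of its distinct subformulas. -/
def dagSize {α : Type} [DecidableEq α] (φ : MForm α) : ℕ := (subf φ).card

end MForm

def psat {α : Type} (v : α → Prop) : MForm α → Prop
  | .top => True
  | .atom p => v p
  | .neg φ => ¬ psat v φ
  | .and φ ψ => psat v φ ∧ psat v ψ
  | .box _ => True

/-- Propositional tautology. -/
def PTaut {α : Type} (φ : MForm α) : Prop := ∀ v : α → Prop, psat v φ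

def bigAnd {α : Type} : List (MForm α) → MForm α
  | [] => .top
  | φ :: l => .and φ (bigAnd l)

def bigOr {α : Type} (l : List (MForm α)) : MForm α := .neg (bigAnd (l.map .neg))

def boxIter {α : Type} : ℕ → MForm α → MForm α
  | 0, φ => φ
  | n + 1, φ => .box (boxIter n φ)

def diaIter {α : Type} : ℕ → MForm α → MForm α
  | 0, φ => φ
  | n + 1, φ => MForm.dia (diaIter n φ)

/-- `□^{≤n} φ`. -/
def ble {α : Type} (n : ℕ) (φ : MForm α) : MForm α :=
  bigAnd ((List.range (n + 1)).map (fun k => boxIter k φ))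

/-- `◇^{≤n} φ`. -/
def dle {α : Type} (n : ℕ) (φ : MForm α) : MForm α := .neg (ble n (.neg φ))

def substAtoms {α β : Type} (s : α → MForm β) : MForm α → MForm β
  | .top => .top
  | .atom a => s a
  | .neg φ => .neg (substAtoms s φ)
  | .and φ ψ => .and (substAtoms s φ) (substAtoms s ψ)
  | .box φ => .box (substAtoms s φ)


/-- A finite rooted (pointed) frame. -/
structure FFrame where
  W : Type
  fin : Fintype W
  deq : DecidableEq W
  R : W → W → Prop
  root : W
  rooted : ∀ w, Relation.ReflTransGen R root w

attribute [instance] FFrame.fin FFrame.deq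

def sat (F : FFrame) (V : F.W → ℕ → Prop) : F.W → MForm ℕ → Prop
  | _, .top => True
  | w, .atom p => V w p
  | w, .neg φ => ¬ sat F V w φ
  | w, .and φ ψ => sat F V w φ ∧ sat F V w ψ
  | w, .box φ => ∀ v, F.R w v → sat F V v φ

/-- The logic determined by a (finite) family of finite rooted frames. -/
def Log {ι : Type} (Fr : ι → FFrame) : Set (MForm ℕ) :=
  {φ | ∀ i, ∀ V : (Fr i).W → ℕ → Prop, sat (Fr i) V (Fr i).root φ}

def StrImp (L : Set (MForm ℕ)) (σ : Finset ℕ) (φ χ : MForm ℕ) : Prop :=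
  χ.sig ⊆ σ ∧ φ.imp χ ∈ L ∧
    ∀ ψ : MForm ℕ, ψ.sig ⊆ σ → φ.imp ψ ∈ L → χ.imp ψ ∈ L

def CraigInt (L : Set (MForm ℕ)) (φ ψ χ : MForm ℕ) : Prop :=
  φ.imp χ ∈ L ∧ χ.imp ψ ∈ L ∧ χ.sig ⊆ φ.sig ∩ ψ.sig

def HasCIP (L : Set (MForm ℕ)) : Prop :=
  ∀ φ ψ : MForm ℕ, φ.imp ψ ∈ L → ∃ χ, CraigInt L φ ψ χ

def IsBisim (σ : Finset ℕ) (F₁ : FFrame) (V₁ : F₁.W → ℕ → Prop)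
    (F₂ : FFrame) (V₂ : F₂.W → ℕ → Prop) (Z : F₁.W → F₂.W → Prop) : Prop :=
  (∀ w₁ w₂, Z w₁ w₂ → ∀ p ∈ σ, (V₁ w₁ p ↔ V₂ w₂ p)) ∧
  (∀ w₁ w₂ v₁, Z w₁ w₂ → F₁.R w₁ v₁ → ∃ v₂, F₂.R w₂ v₂ ∧ Z v₁ v₂) ∧
  (∀ w₁ w₂ v₂, Z w₁ w₂ → F₂.R w₂ v₂ → ∃ v₁, F₁.R w₁ v₁ ∧ Z v₁ v₂)

def Bisim (σ : Finset ℕ) (F₁ : FFrame) (V₁ : F₁.W → ℕ → Prop) (w₁ : F₁.W)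
    (F₂ : FFrame) (V₂ : F₂.W → ℕ → Prop) (w₂ : F₂.W) : Prop :=
  ∃ Z, IsBisim σ F₁ V₁ F₂ V₂ Z ∧ Z w₁ w₂

def IsEME (σ : Finset ℕ) (Φ : Finset (MForm ℕ)) : Prop :=
  (∀ φ ∈ Φ, φ.IsProp ∧ φ.sig ⊆ σ) ∧
  (∀ v : ℕ → Prop, ∃ φ ∈ Φ, psat v φ) ∧
  (∀ φ ∈ Φ, ∀ ψ ∈ Φ, φ ≠ ψ → ∀ v : ℕ → Prop, ¬ (psat v φ ∧ psat v ψ))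

def IsCover (σ : Finset ℕ) (Φ : Finset (MForm ℕ)) (F : FFrame) (V : F.W → ℕ → Prop) : Prop :=
  ∀ φ ∈ Φ, ∀ w₁ w₂, sat F V w₁ φ → sat F V w₂ φ →
    ∀ χ : MForm ℕ, χ.IsProp → χ.sig ⊆ σ → (sat F V w₁ χ ↔ sat F V w₂ χ)

noncomputable def coverFml (σ : Finset ℕ) (Φ : Finset (MForm ℕ)) (N : ℕ) : MForm ℕ :=
  bigAnd (Φ.toList.map (fun φ => bigAnd (σ.toList.map (fun p =>
    MForm.imp (dle N (.and φ (.atom p))) (ble N (MForm.imp φ (.atom p)))))))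

/-- Satisfaction of `ML(Φ)`-formulas on abstract Φ-models `(F,f)`. -/
def asat (F : FFrame) (f : F.W → MForm ℕ) : F.W → MForm (MForm ℕ) → Prop
  | _, .top => True
  | w, .atom φ => f w = φ
  | w, .neg δ => ¬ asat F f w δ
  | w, .and δ₁ δ₂ => asat F f w δ₁ ∧ asat F f w δ₂
  | w, .box δ => ∀ v, F.R w v → asat F f v δ

def AbsBisim (F₁ : FFrame) (f₁ : F₁.W → MForm ℕ)
    (F₂ : FFrame) (f₂ : F₂.W → MForm ℕ) (Z : F₁.W → F₂.W → Prop) : Prop :=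
  (∀ w₁ w₂, Z w₁ w₂ → f₁ w₁ = f₂ w₂) ∧
  (∀ w₁ w₂ v₁, Z w₁ w₂ → F₁.R w₁ v₁ → ∃ v₂, F₂.R w₂ v₂ ∧ Z v₁ v₂) ∧
  (∀ w₁ w₂ v₂, Z w₁ w₂ → F₂.R w₂ v₂ → ∃ v₁, F₁.R w₁ v₁ ∧ Z v₁ v₂)

/-- Abstract Φ-bisimilarity of the roots of two abstract Φ-models. -/
def ABisimRoot (F₁ : FFrame) (f₁ : F₁.W → MForm ℕ) (F₂ : FFrame) (f₂ : F₂.W → MForm ℕ) : Prop :=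
  ∃ Z, AbsBisim F₁ f₁ F₂ f₂ Z ∧ Z F₁.root F₂.root

/-- Viewing a formula of `ML(Φ)` as a modal formula (atoms of `Φ` are formulas). -/
def flatten : MForm (MForm ℕ) → MForm ℕ
  | .top => .top
  | .atom φ => φ
  | .neg δ => .neg (flatten δ)
  | .and δ₁ δ₂ => .and (flatten δ₁) (flatten δ₂)
  | .box δ => .box (flatten δ)

/-- `δ ∈ ML(Φ)` is an abstract class identifier (for the Φ-bisimulation class of some
abstract Φ-model for `L = Log Fr`). -/
def IsClassId {ι : Type} (Fr : ι → FFrame) (Φ : Finset (MForm ℕ)) (δ : MForm (MForm ℕ)) : Prop :=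
  ∃ i, ∃ f : (Fr i).W → MForm ℕ, (∀ w, f w ∈ Φ) ∧
    ∀ j, ∀ f' : (Fr j).W → MForm ℕ, (∀ w, f' w ∈ Φ) →
      (asat (Fr j) f' (Fr j).root δ ↔ ABisimRoot (Fr j) f' (Fr i) f)

/-- A σ-encoding for `L = Log Fr`: a set `Γ` of σ-EMEs together with, for each `Φ ∈ Γ`,
a set `Δ Φ` of abstract class identifiers, such that every model based on a frame of the
family has a σ-cover `Φ ∈ Γ` and satisfies some `δ ∈ Δ Φ` at its root. -/
def IsEncoding {ι : Type} (Fr : ι → FFrame) (σ : Finset ℕ)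
    (Γ : Finset (Finset (MForm ℕ))) (Δ : Finset (MForm ℕ) → Finset (MForm (MForm ℕ))) : Prop :=
  (∀ Φ ∈ Γ, IsEME σ Φ) ∧
  (∀ Φ ∈ Γ, ∀ δ ∈ Δ Φ, MForm.sig δ ⊆ Φ ∧ IsClassId Fr Φ δ) ∧
  (∀ i, ∀ V : (Fr i).W → ℕ → Prop, ∃ Φ ∈ Γ, IsCover σ Φ (Fr i) V ∧
    ∃ δ ∈ Δ Φ, sat (Fr i) V (Fr i).root (flatten δ))

/-- `ξ^f`: replace each atom `p_w` by `◇^{≤N}(f(w) ∧ p)`. -/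
def xiSub (N : ℕ) (F : FFrame) (f : F.W → MForm ℕ) (ξ : MForm (ℕ × F.W)) : MForm ℕ :=
  substAtoms (fun pw => dle N (.and (f pw.2) (.atom pw.1))) ξ

/-- The abstract Φ-models on the frame `F` in the class identified by `δ`. -/
noncomputable def fList (F : FFrame) (Φ : Finset (MForm ℕ)) (δ : MForm (MForm ℕ)) :
    List (F.W → MForm ℕ) :=
  (((@Finset.filter (F.W → {x // x ∈ Φ})
      (fun f => asat F (fun w => (f w).1) F.root δ) (Classical.decPred _)
      Finset.univ)).toList).map (fun f w => (f w).1)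

/-- The backward translation `rt_{F,L}`. -/
noncomputable def rt (σ : Finset ℕ) (N : ℕ)
    (Γ : Finset (Finset (MForm ℕ))) (Δ : Finset (MForm ℕ) → Finset (MForm (MForm ℕ)))
    (F : FFrame) (ξ : MForm (ℕ × F.W)) : MForm ℕ :=
  bigAnd (Γ.toList.map (fun Φ =>
    bigAnd ((Δ Φ).toList.map (fun δ =>
      MForm.imp (.and (coverFml σ Φ N) (flatten δ))
        (bigOr ((fList F Φ δ).map (fun f => xiSub N F f ξ)))))))

/-- The forward translation `tr_{F,w}`. -/
noncomputable def tr (F : FFrame) : MForm ℕ → F.W → MForm (ℕ × F.W)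
  | .top, _ => .top
  | .atom p, w => .atom (p, w)
  | .neg φ, w => .neg (tr F φ w)
  | .and φ ψ, w => .and (tr F φ w) (tr F ψ w)
  | .box φ, w =>
      bigAnd (((@Finset.filter _ (F.R w) (Classical.decPred _) Finset.univ).toList).map
        (fun w' => tr F φ w'))

/-- The propositional valuation `v_M` over the atoms `σ_F = σ × W` induced by a model. -/
def vM (F : FFrame) (V : F.W → ℕ → Prop) : ℕ × F.W → Prop := fun pw => V pw.2 pw.1

/-- Uniform propositional `σ'`-interpolant. -/
def UPropInt {β : Type} [DecidableEq β] (σ' : Finset β) (χ ξ : MForm β) : Prop :=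
  ξ.IsProp ∧ ξ.sig ⊆ σ' ∧ PTaut (χ.imp ξ) ∧
    ∀ ψ : MForm β, ψ.IsProp → ψ.sig ∩ χ.sig ⊆ σ' → PTaut (χ.imp ψ) → PTaut (ξ.imp ψ)

/-- Propositional Craig interpolant for a tautological implication. -/
def PCraig {β : Type} [DecidableEq β] (χ₁ χ₂ ξ : MForm β) : Prop :=
  ξ.IsProp ∧ ξ.sig ⊆ χ₁.sig ∩ χ₂.sig ∧ PTaut (χ₁.imp ξ) ∧ PTaut (ξ.imp χ₂)

/-!
Soundness: on a model of `φ` over `F`, the valuation `v_M` satisfies `tr_{F,0}(φ)`, hence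
`ξ_F`. Labelling each world by the member of the cover `Φ` it satisfies gives an abstract
model in the class of any `δ` true at the root, and since every world lies within `N` steps of
the root, the cover formula makes `◇^{≤N}(f(w) ∧ p)` at the root equivalent to `p` at `w`;
so `ξ_F^f` holds.

Strength: if `(G, V)` satisfies `rt_F(ξ_F)`, the encoding provides a cover `Φ` and an
identifier `δ` true at the root of `G`, hence an abstract model `f` on `F` in the class of `δ`
with `ξ_F^f` true. The valuation `w ↦ {p | G, 0 ⊨ ◇^{≤N}(f(w) ∧ p)}` on `F` satisfies `ξ_F`,
hence `tr_{F,0}(ψ)` for every consequence `ψ` of `φ` over `σ`, and the abstract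
`Φ`-bisimulation between `f` and the labelling of `G` is a `σ`-bisimulation to `(G, V)`.
-/

section Connectives

variable {α : Type}

theorem psat_bigAnd {v : α → Prop} {l : List (MForm α)} :
    psat v (bigAnd l) ↔ ∀ φ ∈ l, psat v φ := by
  induction l with
  | nil => simp [bigAnd, psat]
  | cons a l ih => simp [bigAnd, psat, ih]

theorem psat_imp {v : α → Prop} {φ ψ : MForm α} :
    psat v (φ.imp ψ) ↔ (psat v φ → psat v ψ) := by
  simp [MForm.imp, psat]

theorem sat_bigAnd {F : FFrame} {V : F.W → ℕ → Prop} {w : F.W} {l : List (MForm ℕ)} :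
    sat F V w (bigAnd l) ↔ ∀ φ ∈ l, sat F V w φ := by
  induction l with
  | nil => simp [bigAnd, sat]
  | cons a l ih => simp [bigAnd, sat, ih]

theorem sat_bigOr {F : FFrame} {V : F.W → ℕ → Prop} {w : F.W} {l : List (MForm ℕ)} :
    sat F V w (bigOr l) ↔ ∃ φ ∈ l, sat F V w φ := by
  simp [bigOr, sat, sat_bigAnd]

theorem sat_imp {F : FFrame} {V : F.W → ℕ → Prop} {w : F.W} {φ ψ : MForm ℕ} :
    sat F V w (φ.imp ψ) ↔ (sat F V w φ → sat F V w ψ) := by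
  simp [MForm.imp, sat]

end Connectives

section Reachability

variable {β : Type} {R : β → β → Prop}

def ReachIn (R : β → β → Prop) : ℕ → β → β → Prop
  | 0, a, b => a = b
  | n + 1, a, b => ∃ c, R a c ∧ ReachIn R n c b

theorem reachIn_add {m n : ℕ} {a b : β} :
    ReachIn R (m + n) a b ↔ ∃ c, ReachIn R m a c ∧ ReachIn R n c b := by
  induction m generalizing a with
  | zero => simp [ReachIn]
  | succ m ih =>
    rw [Nat.add_right_comm]
    simp only [ReachIn, ih]
    aesop

theorem exists_reachIn_of_reflTransGen {a b : β} (h : Relation.ReflTransGen R a b) :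
    ∃ n, ReachIn R n a b := by
  induction h using Relation.ReflTransGen.head_induction_on with
  | refl => exact ⟨0, rfl⟩
  | head hac _ ih =>
    obtain ⟨n, hn⟩ := ih
    exact ⟨n + 1, _, hac, hn⟩

theorem exists_reachIn_lt_of_card_le [Fintype β] {n : ℕ} {a b : β} (h : ReachIn R n a b)
    (hn : Fintype.card β ≤ n) : ∃ m < n, ReachIn R m a b := by
  have hsplit : ∀ i : Fin (n + 1), ∃ c, ReachIn R i a c ∧ ReachIn R (n - i) c b := fun i =>
    reachIn_add.1 (by rwa [Nat.add_sub_cancel' (Nat.lt_succ_iff.1 i.2)])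
  choose p hp using hsplit
  -- pigeonhole: the walk is at the same point at two times `i < j`; cut out that loop
  obtain ⟨i, j, hne, heq⟩ := Fintype.exists_ne_map_eq_of_card_lt p (by simp; omega)
  wlog hij : i < j generalizing i j
  · exact this j i hne.symm heq.symm (lt_of_le_of_ne (not_lt.1 hij) hne.symm)
  have hj : (j : ℕ) ≤ n := Nat.lt_succ_iff.1 j.2
  have hij' : (i : ℕ) < j := hij
  exact ⟨i + (n - j), by omega, reachIn_add.2 ⟨p i, (hp i).1, heq ▸ (hp j).2⟩⟩

theorem exists_reachIn_lt_card [Fintype β] {a b : β} (h : Relation.ReflTransGen R a b) :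
    ∃ n < Fintype.card β, ReachIn R n a b := by
  obtain ⟨n, hn⟩ := exists_reachIn_of_reflTransGen h
  induction n using Nat.strong_induction_on with
  | _ n ih =>
    by_cases hlt : n < Fintype.card β
    · exact ⟨n, hlt, hn⟩
    · obtain ⟨m, hm, hm'⟩ := exists_reachIn_lt_of_card_le hn (not_lt.1 hlt)
      exact ih m hm hm'

end Reachability

section Modalities

variable {F : FFrame} {V : F.W → ℕ → Prop} {φ : MForm ℕ} {N : ℕ}

theorem sat_boxIter {n : ℕ} {w : F.W} :
    sat F V w (boxIter n φ) ↔ ∀ v, ReachIn F.R n w v → sat F V v φ := by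
  induction n generalizing w with
  | zero => simp [boxIter, ReachIn]
  | succ n ih =>
    simp only [boxIter, sat, ReachIn, ih]
    exact ⟨fun h v ⟨u, hu, huv⟩ => h u hu v huv, fun h u hu v huv => h v ⟨u, hu, huv⟩⟩

theorem sat_ble_root_iff (hN : Fintype.card F.W ≤ N) :
    sat F V F.root (ble N φ) ↔ ∀ w, sat F V w φ := by
  simp only [ble, sat_bigAnd, List.forall_mem_map, List.mem_range, sat_boxIter]
  refine ⟨fun h w => ?_, fun h k _ v _ => h v⟩
  obtain ⟨k, hk, hw⟩ := exists_reachIn_lt_card (F.rooted w)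
  exact h k (by omega) w hw

theorem sat_dle_root_iff (hN : Fintype.card F.W ≤ N) :
    sat F V F.root (dle N φ) ↔ ∃ w, sat F V w φ := by
  simp [dle, sat, sat_ble_root_iff hN]

end Modalities

section Cover

variable {σ : Finset ℕ} {Φ : Finset (MForm ℕ)} {F : FFrame} {V : F.W → ℕ → Prop} {N : ℕ}

theorem sat_coverFml_root_iff (hN : Fintype.card F.W ≤ N) :
    sat F V F.root (coverFml σ Φ N) ↔
      ∀ φ ∈ Φ, ∀ p ∈ σ, ∀ w, sat F V w φ → V w p → ∀ u, sat F V u φ → V u p := by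
  simp [coverFml, sat_bigAnd, sat_imp, sat_dle_root_iff hN, sat_ble_root_iff hN, sat]

theorem sat_coverFml_of_isCover (hN : Fintype.card F.W ≤ N) (hc : IsCover σ Φ F V) :
    sat F V F.root (coverFml σ Φ N) :=
  (sat_coverFml_root_iff hN).2 fun φ hφ p hp w hw hpw u hu =>
    (hc φ hφ w u hw hu (.atom p) trivial (by simpa [MForm.sig] using hp)).1 hpw

theorem sat_dle_and_atom_iff (hN : Fintype.card F.W ≤ N)
    (hcov : sat F V F.root (coverFml σ Φ N)) {φ : MForm ℕ} (hφ : φ ∈ Φ) {p : ℕ} (hp : p ∈ σ)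
    {w : F.W} (hw : sat F V w φ) :
    sat F V F.root (dle N (.and φ (.atom p))) ↔ V w p := by
  rw [sat_dle_root_iff hN]
  exact ⟨fun ⟨u, hu, hpu⟩ => (sat_coverFml_root_iff hN).1 hcov φ hφ p hp u hu hpu w hw,
    fun hpw => ⟨w, hw, hpw⟩⟩

end Cover

section Translation

variable {F : FFrame}

theorem psat_congr {α : Type} [DecidableEq α] {v₁ v₂ : α → Prop} {φ : MForm α}
    (h : ∀ a ∈ φ.sig, (v₁ a ↔ v₂ a)) : psat v₁ φ ↔ psat v₂ φ := by
  induction φ with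
  | top => rfl
  | atom p => exact h p (by simp [MForm.sig])
  | neg φ ih => exact not_congr (ih h)
  | and φ ψ ih₁ ih₂ =>
    exact and_congr (ih₁ fun a ha => h a (by simp [MForm.sig, ha]))
      (ih₂ fun a ha => h a (by simp [MForm.sig, ha]))
  | box φ _ => rfl

theorem sat_iff_psat_of_isProp {V : F.W → ℕ → Prop} {w : F.W} {χ : MForm ℕ} (hχ : χ.IsProp) :
    sat F V w χ ↔ psat (V w) χ := by
  induction χ with
  | top | atom => rfl
  | neg φ ih => exact not_congr (ih hχ)
  | and φ ψ ih₁ ih₂ => exact and_congr (ih₁ hχ.1) (ih₂ hχ.2)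
  | box => exact hχ.elim

theorem sat_substAtoms {V : F.W → ℕ → Prop} {w : F.W} {β : Type} {s : β → MForm ℕ}
    {ξ : MForm β} (hξ : ξ.IsProp) :
    sat F V w (substAtoms s ξ) ↔ psat (fun a => sat F V w (s a)) ξ := by
  induction ξ with
  | top | atom => rfl
  | neg φ ih => exact not_congr (ih hξ)
  | and φ ψ ih₁ ih₂ => exact and_congr (ih₁ hξ.1) (ih₂ hξ.2)
  | box => exact hξ.elim

theorem isProp_bigAnd {α : Type} {l : List (MForm α)} (h : ∀ φ ∈ l, φ.IsProp) :
    (bigAnd l).IsProp := by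
  induction l with
  | nil => trivial
  | cons a l ih => exact ⟨h a (by simp), ih fun φ hφ => h φ (by simp [hφ])⟩

theorem isProp_tr {φ : MForm ℕ} {w : F.W} : (tr F φ w).IsProp := by
  induction φ generalizing w with
  | top | atom => trivial
  | neg φ ih => exact ih
  | and φ ψ ih₁ ih₂ => exact ⟨ih₁, ih₂⟩
  | box φ ih => exact isProp_bigAnd (by simp [ih])

theorem psat_tr {V : F.W → ℕ → Prop} {φ : MForm ℕ} {w : F.W} :
    psat (vM F V) (tr F φ w) ↔ sat F V w φ := by
  induction φ generalizing w with
  | top | atom => rfl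
  | neg φ ih => exact not_congr ih
  | and φ ψ ih₁ ih₂ => exact and_congr ih₁ ih₂
  | box φ ih => simp [tr, sat, psat_bigAnd, ih]

theorem pTaut_tr_imp_of_imp_mem_log {ι : Type} {Fr : ι → FFrame} {φ ψ : MForm ℕ}
    (h : φ.imp ψ ∈ Log Fr) (i : ι) :
    PTaut ((tr (Fr i) φ (Fr i).root).imp (tr (Fr i) ψ (Fr i).root)) := by
  intro v
  have hv : v = vM (Fr i) fun w p => v (p, w) := rfl
  rw [psat_imp, hv, psat_tr, psat_tr]
  exact sat_imp.1 (h i _)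

end Translation

section Signatures

variable {α : Type} [DecidableEq α]

theorem sig_imp {φ ψ : MForm α} : (φ.imp ψ).sig = φ.sig ∪ ψ.sig := by
  simp [MForm.imp, MForm.sig]

theorem sig_bigAnd_subset {l : List (MForm α)} {s : Finset α} (h : ∀ φ ∈ l, φ.sig ⊆ s) :
    (bigAnd l).sig ⊆ s := by
  induction l with
  | nil => simp [bigAnd, MForm.sig]
  | cons a l ih =>
    simp only [bigAnd, MForm.sig, Finset.union_subset_iff]
    exact ⟨h a (by simp), ih fun φ hφ => h φ (by simp [hφ])⟩

theorem sig_bigOr_subset {l : List (MForm α)} {s : Finset α} (h : ∀ φ ∈ l, φ.sig ⊆ s) :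
    (bigOr l).sig ⊆ s :=
  sig_bigAnd_subset (by simpa [MForm.sig] using h)

theorem sig_boxIter {n : ℕ} {φ : MForm α} : (boxIter n φ).sig = φ.sig := by
  induction n with
  | zero => rfl
  | succ n ih => simpa [boxIter, MForm.sig] using ih

theorem sig_ble_subset {n : ℕ} {φ : MForm α} : (ble n φ).sig ⊆ φ.sig :=
  sig_bigAnd_subset (by simp [sig_boxIter])

theorem sig_dle_subset {n : ℕ} {φ : MForm α} : (dle n φ).sig ⊆ φ.sig :=
  sig_ble_subset

theorem sig_substAtoms_subset {β : Type} [DecidableEq β] {s : α → MForm β} {t : Finset β}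
    {ξ : MForm α} (h : ∀ a ∈ ξ.sig, (s a).sig ⊆ t) : (substAtoms s ξ).sig ⊆ t := by
  induction ξ with
  | top => simp [substAtoms, MForm.sig]
  | atom a => exact h a (by simp [MForm.sig])
  | neg φ ih | box φ ih => exact ih h
  | and φ ψ ih₁ ih₂ =>
    exact Finset.union_subset (ih₁ fun a ha => h a (by simp [MForm.sig, ha]))
      (ih₂ fun a ha => h a (by simp [MForm.sig, ha]))

theorem sig_flatten_subset {t : Finset ℕ} {δ : MForm (MForm ℕ)}
    (h : ∀ φ ∈ δ.sig, φ.sig ⊆ t) : (flatten δ).sig ⊆ t := by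
  induction δ with
  | top => simp [flatten, MForm.sig]
  | atom φ => exact h φ (by simp [MForm.sig])
  | neg δ ih | box δ ih => exact ih h
  | and δ₁ δ₂ ih₁ ih₂ =>
    exact Finset.union_subset (ih₁ fun a ha => h a (by simp [MForm.sig, ha]))
      (ih₂ fun a ha => h a (by simp [MForm.sig, ha]))

theorem sig_tr_subset {F : FFrame} {φ : MForm ℕ} {w : F.W} :
    (tr F φ w).sig ⊆ φ.sig ×ˢ Finset.univ := by
  induction φ generalizing w with
  | top => simp [tr, MForm.sig]
  | atom p => simp [tr, MForm.sig]
  | neg φ ih => exact ih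
  | and φ ψ ih₁ ih₂ =>
    exact Finset.union_subset
      (ih₁.trans (Finset.product_subset_product_left Finset.subset_union_left))
      (ih₂.trans (Finset.product_subset_product_left Finset.subset_union_right))
  | box φ ih => exact sig_bigAnd_subset (by simpa [MForm.sig] using fun _ _ => ih)

variable {σ : Finset ℕ} {Φ : Finset (MForm ℕ)} {N : ℕ}

theorem sig_coverFml_subset (hΦ : ∀ φ ∈ Φ, φ.sig ⊆ σ) : (coverFml σ Φ N).sig ⊆ σ := by
  refine sig_bigAnd_subset (List.forall_mem_map.2 fun φ hφ =>
    sig_bigAnd_subset (List.forall_mem_map.2 fun p hp => ?_))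
  rw [Finset.mem_toList] at hφ hp
  have hφp : φ.sig ∪ {p} ⊆ σ := Finset.union_subset (hΦ φ hφ) (by simpa using hp)
  simp only [sig_imp]
  exact Finset.union_subset (sig_dle_subset.trans hφp) (sig_ble_subset.trans (by
    simpa [sig_imp, MForm.sig] using hφp))

end Signatures

section Labelling

variable {σ : Finset ℕ} {Φ : Finset (MForm ℕ)} {F : FFrame} {V : F.W → ℕ → Prop}

theorem IsEME.exists_label (hΦ : IsEME σ Φ) (F : FFrame) (V : F.W → ℕ → Prop) :
    ∃ f : F.W → MForm ℕ, ∀ w, f w ∈ Φ ∧ sat F V w (f w) := by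
  choose f hf hsat using fun w => hΦ.2.1 (V w)
  exact ⟨f, fun w => ⟨hf w, (sat_iff_psat_of_isProp (hΦ.1 _ (hf w)).1).2 (hsat w)⟩⟩

theorem IsEME.eq_of_sat (hΦ : IsEME σ Φ) {φ ψ : MForm ℕ} (hφ : φ ∈ Φ) (hψ : ψ ∈ Φ) {w : F.W}
    (hwφ : sat F V w φ) (hwψ : sat F V w ψ) : φ = ψ := by
  by_contra hne
  exact hΦ.2.2 φ hφ ψ hψ hne (V w) ⟨(sat_iff_psat_of_isProp (hΦ.1 φ hφ).1).1 hwφ,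
    (sat_iff_psat_of_isProp (hΦ.1 ψ hψ).1).1 hwψ⟩

theorem IsEME.sat_flatten_iff_asat (hΦ : IsEME σ Φ) {f : F.W → MForm ℕ}
    (hf : ∀ w, f w ∈ Φ ∧ sat F V w (f w)) {δ : MForm (MForm ℕ)} (hδ : δ.sig ⊆ Φ) (w : F.W) :
    sat F V w (flatten δ) ↔ asat F f w δ := by
  induction δ generalizing w with
  | top => rfl
  | atom φ =>
    exact ⟨fun h => hΦ.eq_of_sat (hf w).1 (hδ (by simp [MForm.sig])) (hf w).2 h,
      fun h => h ▸ (hf w).2⟩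
  | neg δ ih => exact not_congr (ih hδ w)
  | and δ₁ δ₂ ih₁ ih₂ =>
    exact and_congr (ih₁ (fun a ha => hδ (by simp [MForm.sig, ha])) w)
      (ih₂ (fun a ha => hδ (by simp [MForm.sig, ha])) w)
  | box δ ih => exact forall₂_congr fun v _ => ih hδ v

end Labelling

theorem mem_fList {F : FFrame} {Φ : Finset (MForm ℕ)} {δ : MForm (MForm ℕ)}
    {f : F.W → MForm ℕ} : f ∈ fList F Φ δ ↔ (∀ w, f w ∈ Φ) ∧ asat F f F.root δ := by
  simp only [fList, List.mem_map, Finset.mem_toList, Finset.mem_filter, Finset.mem_univ,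
    true_and]
  constructor
  · rintro ⟨g, hg, rfl⟩
    exact ⟨fun w => (g w).2, hg⟩
  · rintro ⟨hΦ, hδ⟩
    exact ⟨fun w => ⟨f w, hΦ w⟩, hδ, rfl⟩

section Bisimulation

theorem IsBisim.sat_iff {σ : Finset ℕ} {F₁ F₂ : FFrame} {V₁ : F₁.W → ℕ → Prop}
    {V₂ : F₂.W → ℕ → Prop} {Z : F₁.W → F₂.W → Prop} (hZ : IsBisim σ F₁ V₁ F₂ V₂ Z)
    {ψ : MForm ℕ} (hψ : ψ.sig ⊆ σ) {w₁ : F₁.W} {w₂ : F₂.W} (hw : Z w₁ w₂) :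
    sat F₁ V₁ w₁ ψ ↔ sat F₂ V₂ w₂ ψ := by
  induction ψ generalizing w₁ w₂ with
  | top => rfl
  | atom p => exact hZ.1 w₁ w₂ hw p (hψ (by simp [MForm.sig]))
  | neg ψ ih => exact not_congr (ih hψ hw)
  | and ψ₁ ψ₂ ih₁ ih₂ =>
    exact and_congr (ih₁ (fun a ha => hψ (by simp [MForm.sig, ha])) hw)
      (ih₂ (fun a ha => hψ (by simp [MForm.sig, ha])) hw)
  | box ψ ih =>
    constructor
    · intro h v₂ hv₂
      obtain ⟨v₁, hv₁, hv⟩ := hZ.2.2 w₁ w₂ v₂ hw hv₂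
      exact (ih hψ hv).1 (h v₁ hv₁)
    · intro h v₁ hv₁
      obtain ⟨v₂, hv₂, hv⟩ := hZ.2.1 w₁ w₂ v₁ hw hv₁
      exact (ih hψ hv).2 (h v₂ hv₂)

variable {F₁ F₂ F₃ : FFrame} {f₁ : F₁.W → MForm ℕ} {f₂ : F₂.W → MForm ℕ}
  {f₃ : F₃.W → MForm ℕ}

theorem ABisimRoot.symm (h : ABisimRoot F₁ f₁ F₂ f₂) : ABisimRoot F₂ f₂ F₁ f₁ := by
  obtain ⟨Z, ⟨hlab, hforth, hback⟩, hroot⟩ := h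
  exact ⟨flip Z, ⟨fun w₂ w₁ hw => (hlab w₁ w₂ hw).symm, fun w₂ w₁ v₂ hw hv =>
    hback w₁ w₂ v₂ hw hv, fun w₂ w₁ v₁ hw hv => hforth w₁ w₂ v₁ hw hv⟩, hroot⟩

theorem ABisimRoot.trans (h₁₂ : ABisimRoot F₁ f₁ F₂ f₂) (h₂₃ : ABisimRoot F₂ f₂ F₃ f₃) :
    ABisimRoot F₁ f₁ F₃ f₃ := by
  obtain ⟨Z, ⟨hlab, hforth, hback⟩, hroot⟩ := h₁₂
  obtain ⟨Z', ⟨hlab', hforth', hback'⟩, hroot'⟩ := h₂₃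
  refine ⟨Relation.Comp Z Z', ⟨?_, ?_, ?_⟩, _, hroot, hroot'⟩
  · rintro w₁ w₃ ⟨w₂, hw, hw'⟩
    exact (hlab w₁ w₂ hw).trans (hlab' w₂ w₃ hw')
  · rintro w₁ w₃ v₁ ⟨w₂, hw, hw'⟩ hv₁
    obtain ⟨v₂, hv₂, hv⟩ := hforth w₁ w₂ v₁ hw hv₁
    obtain ⟨v₃, hv₃, hv'⟩ := hforth' w₂ w₃ v₂ hw' hv₂
    exact ⟨v₃, hv₃, v₂, hv, hv'⟩
  · rintro w₁ w₃ v₃ ⟨w₂, hw, hw'⟩ hv₃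
    obtain ⟨v₂, hv₂, hv'⟩ := hback' w₂ w₃ v₃ hw' hv₃
    obtain ⟨v₁, hv₁, hv⟩ := hback w₁ w₂ v₂ hw hv₂
    exact ⟨v₁, hv₁, v₂, hv, hv'⟩

theorem IsClassId.aBisimRoot {ι : Type} {Fr : ι → FFrame} {Φ : Finset (MForm ℕ)}
    {δ : MForm (MForm ℕ)} (hδ : IsClassId Fr Φ δ) {i j : ι} {f : (Fr i).W → MForm ℕ}
    {g : (Fr j).W → MForm ℕ} (hf : ∀ w, f w ∈ Φ) (hg : ∀ w, g w ∈ Φ)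
    (hfδ : asat (Fr i) f (Fr i).root δ) (hgδ : asat (Fr j) g (Fr j).root δ) :
    ABisimRoot (Fr i) f (Fr j) g := by
  obtain ⟨_, _, -, he⟩ := hδ
  exact ((he i f hf).1 hfδ).trans ((he j g hg).1 hgδ).symm

end Bisimulation

section BackTranslation

variable {σ : Finset ℕ} {N : ℕ} {Γ : Finset (Finset (MForm ℕ))}
  {Δ : Finset (MForm ℕ) → Finset (MForm (MForm ℕ))} {F : FFrame} {ξ : MForm (ℕ × F.W)}

theorem sat_rt_iff {G : FFrame} {V : G.W → ℕ → Prop} {w : G.W} :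
    sat G V w (rt σ N Γ Δ F ξ) ↔ ∀ Φ ∈ Γ, ∀ δ ∈ Δ Φ, sat G V w (coverFml σ Φ N) →
      sat G V w (flatten δ) → ∃ f ∈ fList F Φ δ, sat G V w (xiSub N F f ξ) := by
  simp [rt, sat_bigAnd, sat_bigOr, sat_imp, sat]

theorem sig_rt_subset (hΓ : ∀ Φ ∈ Γ, ∀ φ ∈ Φ, φ.sig ⊆ σ)
    (hΔ : ∀ Φ ∈ Γ, ∀ δ ∈ Δ Φ, δ.sig ⊆ Φ) (hξ : ξ.sig ⊆ σ ×ˢ Finset.univ) :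
    (rt σ N Γ Δ F ξ).sig ⊆ σ := by
  refine sig_bigAnd_subset (List.forall_mem_map.2 fun Φ hΦ =>
    sig_bigAnd_subset (List.forall_mem_map.2 fun δ hδ => ?_))
  rw [Finset.mem_toList] at hΦ hδ
  rw [sig_imp]
  refine Finset.union_subset (Finset.union_subset (sig_coverFml_subset (hΓ Φ hΦ))
    (sig_flatten_subset fun φ hφ => hΓ Φ hΦ φ (hΔ Φ hΦ δ hδ hφ))) ?_
  refine sig_bigOr_subset (List.forall_mem_map.2 fun f hf => ?_)
  refine sig_substAtoms_subset fun pw hpw => sig_dle_subset.trans ?_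
  exact Finset.union_subset (hΓ Φ hΦ _ ((mem_fList.1 hf).1 pw.2))
    (by simpa [MForm.sig] using (Finset.mem_product.1 (hξ hpw)).1)

def pullbackVal (N : ℕ) (F : FFrame) (f : F.W → MForm ℕ) (G : FFrame) (V : G.W → ℕ → Prop) :
    F.W → ℕ → Prop :=
  fun w p => sat G V G.root (dle N (.and (f w) (.atom p)))

theorem sat_xiSub_iff {G : FFrame} {V : G.W → ℕ → Prop} {f : F.W → MForm ℕ}
    (hξ : ξ.IsProp) :
    sat G V G.root (xiSub N F f ξ) ↔ psat (vM F (pullbackVal N F f G V)) ξ :=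
  sat_substAtoms hξ

theorem isBisim_pullbackVal {Φ : Finset (MForm ℕ)} {G : FFrame} {V : G.W → ℕ → Prop}
    (hN : Fintype.card G.W ≤ N) (hcov : sat G V G.root (coverFml σ Φ N))
    {f : F.W → MForm ℕ} (hf : ∀ w, f w ∈ Φ) {g : G.W → MForm ℕ} (hg : ∀ u, sat G V u (g u))
    {Z : F.W → G.W → Prop} (hZ : AbsBisim F f G g Z) :
    IsBisim σ F (pullbackVal N F f G V) G V Z :=
  ⟨fun w u hwu _ hp => sat_dle_and_atom_iff hN hcov (hf w) hp (hZ.1 w u hwu ▸ hg u),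
    hZ.2.1, hZ.2.2⟩

end BackTranslation

theorem sat_rt_root {σ : Finset ℕ} {N : ℕ} {Γ : Finset (Finset (MForm ℕ))}
    {Δ : Finset (MForm ℕ) → Finset (MForm (MForm ℕ))} {F : FFrame}
    (hN : Fintype.card F.W ≤ N) (hΓ : ∀ Φ ∈ Γ, IsEME σ Φ)
    (hΔ : ∀ Φ ∈ Γ, ∀ δ ∈ Δ Φ, δ.sig ⊆ Φ) {ξ : MForm (ℕ × F.W)} (hξ : ξ.IsProp)
    (hξσ : ξ.sig ⊆ σ ×ˢ Finset.univ) {V : F.W → ℕ → Prop} (hV : psat (vM F V) ξ) :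
    sat F V F.root (rt σ N Γ Δ F ξ) := by
  refine sat_rt_iff.2 fun Φ hΦ δ hδ hcov hδV => ?_
  obtain ⟨f, hf⟩ := (hΓ Φ hΦ).exists_label F V
  refine ⟨f, mem_fList.2 ⟨fun w => (hf w).1,
    ((hΓ Φ hΦ).sat_flatten_iff_asat hf (hΔ Φ hΦ δ hδ) _).1 hδV⟩, ?_⟩
  refine (sat_xiSub_iff hξ).2 ((psat_congr fun pw hpw => ?_).1 hV)
  exact (sat_dle_and_atom_iff hN hcov (hf pw.2).1 (Finset.mem_product.1 (hξσ hpw)).1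
    (hf pw.2).2).symm

theorem sat_of_sat_rt {ι : Type} {Fr : ι → FFrame} {σ : Finset ℕ} {N : ℕ}
    {Γ : Finset (Finset (MForm ℕ))} {Δ : Finset (MForm ℕ) → Finset (MForm (MForm ℕ))}
    (henc : IsEncoding Fr σ Γ Δ) (hN : ∀ i, Fintype.card (Fr i).W ≤ N) {i : ι}
    {ξ : MForm (ℕ × (Fr i).W)} (hξ : ξ.IsProp) {ψ : MForm ℕ} (hψ : ψ.sig ⊆ σ)
    (hξψ : PTaut (ξ.imp (tr (Fr i) ψ (Fr i).root))) {j : ι} {V : (Fr j).W → ℕ → Prop}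
    (h : sat (Fr j) V (Fr j).root (rt σ N Γ Δ (Fr i) ξ)) : sat (Fr j) V (Fr j).root ψ := by
  obtain ⟨hΓ, hΔ, hmodels⟩ := henc
  obtain ⟨Φ, hΦ, hcover, δ, hδ, hδV⟩ := hmodels j V
  have hcov := sat_coverFml_of_isCover (hN j) hcover
  obtain ⟨f, hf, hξf⟩ := sat_rt_iff.1 h Φ hΦ δ hδ hcov hδV
  obtain ⟨hfΦ, hfδ⟩ := mem_fList.1 hf
  obtain ⟨g, hg⟩ := (hΓ Φ hΦ).exists_label (Fr j) V
  have hgδ := ((hΓ Φ hΦ).sat_flatten_iff_asat hg (hΔ Φ hΦ δ hδ).1 _).1 hδV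
  obtain ⟨Z, hZ, hroot⟩ :=
    (hΔ Φ hΦ δ hδ).2.aBisimRoot hfΦ (fun u => (hg u).1) hfδ hgδ
  have hψ' : sat (Fr i) (pullbackVal N (Fr i) f (Fr j) V) (Fr i).root ψ :=
    psat_tr.1 (psat_imp.1 (hξψ _) ((sat_xiSub_iff hξ).1 hξf))
  exact ((isBisim_pullbackVal (hN j) hcov hfΦ (fun u => (hg u).2) hZ).sat_iff hψ hroot).1 hψ'

theorem stmt10_general {ι : Type} [Fintype ι] (Fr : ι → FFrame)
    (φ : MForm ℕ) (σ : Finset ℕ)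
    (Γ : Finset (Finset (MForm ℕ))) (Δ : Finset (MForm ℕ) → Finset (MForm (MForm ℕ)))
    (henc : IsEncoding Fr σ Γ Δ)
    (ξ : ∀ i, MForm (ℕ × (Fr i).W))
    (hξ : ∀ i, UPropInt (σ ×ˢ Finset.univ) (tr (Fr i) φ (Fr i).root) (ξ i)) :
    StrImp (Log Fr) σ φ
      (bigOr ((Finset.univ : Finset ι).toList.map (fun i =>
        rt σ (Finset.univ.sup (fun j => Fintype.card (Fr j).W)) Γ Δ (Fr i) (ξ i)))) := by
  set N := Finset.univ.sup fun j => Fintype.card (Fr j).W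
  have hN : ∀ i, Fintype.card (Fr i).W ≤ N :=
    fun i => Finset.le_sup (f := fun j => Fintype.card (Fr j).W) (Finset.mem_univ i)
  have hΓσ : ∀ Φ ∈ Γ, ∀ φ' ∈ Φ, φ'.sig ⊆ σ := fun Φ hΦ φ' hφ' => ((henc.1 Φ hΦ).1 φ' hφ').2
  have hΔ : ∀ Φ ∈ Γ, ∀ δ ∈ Δ Φ, δ.sig ⊆ Φ := fun Φ hΦ δ hδ => (henc.2.1 Φ hΦ δ hδ).1
  refine ⟨sig_bigOr_subset ?_, fun i V => ?_, fun ψ hψ hφψ j V => ?_⟩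
  · exact List.forall_mem_map.2 fun i _ => sig_rt_subset hΓσ hΔ (hξ i).2.1
  · refine sat_imp.2 fun hφ => sat_bigOr.2
      ⟨_, List.mem_map_of_mem (Finset.mem_toList.2 (Finset.mem_univ i)), ?_⟩
    exact sat_rt_root (hN i) henc.1 hΔ (hξ i).1 (hξ i).2.1
      (psat_imp.1 ((hξ i).2.2.1 _) (psat_tr.2 hφ))
  · refine sat_imp.2 fun h => ?_
    obtain ⟨_, hχ, hrt⟩ := sat_bigOr.1 h
    obtain ⟨i, -, rfl⟩ := List.mem_map.1 hχ
    have hsig : (tr (Fr i) ψ (Fr i).root).sig ∩ (tr (Fr i) φ (Fr i).root).sig ⊆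
        σ ×ˢ Finset.univ := fun a ha =>
      Finset.product_subset_product_left hψ (sig_tr_subset (Finset.mem_inter.1 ha).1)
    exact sat_of_sat_rt henc hN (hξ i).1 hψ
      ((hξ i).2.2.2 _ isProp_tr hsig (pTaut_tr_imp_of_imp_mem_log hφψ i)) hrt

/-- for a tabular quasi-normal logic `L = Log Fr` (finite family of finite
rooted frames), a σ-encoding for `L`, and uniform `σ_F`-interpolants `ξ_F` of `tr_{F,0}(φ)`
in propositional logic (one for each frame of the family), the disjunction
`⋁_{F∈𝓕} rt_{F,L}(ξ_F)` is a strongest `L(σ)`-implicate of `φ`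
(where `N = max{|F| : F ∈ 𝓕}`). -/
theorem stmt10 {ι : Type} [Fintype ι] (Fr : ι → FFrame)
    (φ : MForm ℕ) (σ : Finset ℕ) (hσ : σ ⊆ φ.sig)
    (Γ : Finset (Finset (MForm ℕ))) (Δ : Finset (MForm ℕ) → Finset (MForm (MForm ℕ)))
    (henc : IsEncoding Fr σ Γ Δ)
    (ξ : ∀ i, MForm (ℕ × (Fr i).W))
    (hξ : ∀ i, UPropInt (σ ×ˢ Finset.univ) (tr (Fr i) φ (Fr i).root) (ξ i)) :
    StrImp (Log Fr) σ φ
      (bigOr ((Finset.univ : Finset ι).toList.map (fun i =>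
        rt σ (Finset.univ.sup (fun j => Fintype.card (Fr j).W)) Γ Δ (Fr i) (ξ i)))) :=
  stmt10_general Fr φ σ Γ Δ henc ξ hξ
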